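/- Marginal always-taker covariate means: suppose (X, T_w(1), T_w(0)) is independent of Z for each wave w, and Monotonicity, IMCO, and absorbing treatment hold. Fix a wave w > 1 and suppose P(T_1 = 1, Z = 0) > 0, P(1 ≤ T_w < w, Z = 1) > 0, and P(T_w(1) = T_w(0) ≥ 1) > 0. Then E[X | T_w(1) = T_w(0) ≥ 1] = π_w · E[X | T_1 = 1, Z = 0] + (1 − π_w) · E[X | 1 ≤ T_w < w, Z = 1], where π_w = E[1[T_w = w] | Z = 0] / (E[1[T_w = w] | Z = 0] + E[1[1 ≤ T_w < w] | Z = 1]). -/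

import Mathlib

/-!
Write `A` for the always-takers `{T_w(1) = T_w(0) ≥ 1}`. Monotonicity and IMCO split `A`, up to a
null set, into the disjoint events `B = {T_w(0) = w}` and `C = {1 ≤ T_w(1) < w}`, so `E[X | A]` is
the `P(B) : P(C)` mixture of `E[X | B]` and `E[X | C]`. Absorption identifies `{T_1 = 1, Z = 0}`
with `B ∩ {Z = 0}`, and `{1 ≤ T_w < w, Z = 1}` is `C ∩ {Z = 1}`. Since `(X, T_w(1), T_w(0))` is
independent of `Z`, conditioning further on `Z` changes neither the conditional means of `X` nor
the probabilities of `B` and `C`, which are therefore `E[1[T_w = w] | Z = 0]` and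
`E[1[1 ≤ T_w < w] | Z = 1]`.
-/

open MeasureTheory ProbabilityTheory Finset

/-- Conditional mean `E[X | A]`: the expectation of `X` under `P` conditioned on the event `A`. -/
noncomputable def cmean {Ω : Type*} [MeasurableSpace Ω] (P : MeasureTheory.Measure Ω)
    (A : Set Ω) (X : Ω → ℝ) : ℝ :=
  ∫ ω, X ω ∂(P[|A])

theorem eq_self_iff_eq_one_of_absorbing {t : ℕ → ℕ} {n : ℕ}
    (habs : ∀ k, 1 ≤ k → k < n → (1 ≤ t k → t (k + 1) = t k + 1) ∧ (t k = 0 → t (k + 1) ≤ 1))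
    (h1 : t 1 ≤ 1) {w : ℕ} (hw : 1 ≤ w) (hwn : w ≤ n) : t w = w ↔ t 1 = 1 := by
  suffices ∀ k, 1 ≤ k → k ≤ n → (t k = k ↔ t 1 = 1) ∧ t k ≤ k from (this w hw hwn).1
  intro k hk
  induction k, hk using Nat.le_induction with
  | base => exact fun _ => ⟨Iff.rfl, h1⟩
  | succ k hk ih =>
    intro hkn
    obtain ⟨ih_iff, ih_le⟩ := ih (by omega)
    obtain ⟨hpos, hzero⟩ := habs k hk (by omega)
    have hstep : t (k + 1) = t k + 1 ∨ (t k = 0 ∧ t (k + 1) ≤ 1) := by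
      rcases Nat.eq_zero_or_pos (t k) with h0 | h0
      exacts [Or.inr ⟨h0, hzero h0⟩, Or.inl (hpos h0)]
    exact ⟨by rw [← ih_iff]; omega, by omega⟩

theorem setOf_and_eq_inter_preimage {Ω α : Type*} (Z : Ω → α) (q : α → Ω → Prop) (z : α) :
    {ω | q (Z ω) ω ∧ Z ω = z} = {ω | q z ω} ∩ Z ⁻¹' {z} := by
  ext ω
  exact ⟨fun ⟨h, hz⟩ => ⟨hz ▸ h, hz⟩, fun ⟨h, hz⟩ => ⟨hz ▸ h, hz⟩⟩

section events

variable {Ω : Type*} [MeasurableSpace Ω] {P : Measure Ω} {T₀ T₁ : Ω → ℕ} {w : ℕ}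

theorem setOf_eq_and_one_le_ae_eq_union (hw : 1 ≤ w) (hT₁ : ∀ ω, T₁ ω ≤ w)
    (hmono : ∀ᵐ ω ∂P, T₀ ω ≤ T₁ ω) (himco : ∀ᵐ ω ∂P, T₀ ω < T₁ ω → T₁ ω = w) :
    {ω | T₁ ω = T₀ ω ∧ 1 ≤ T₀ ω} =ᵐ[P] ({ω | T₀ ω = w} ∪ {ω | 1 ≤ T₁ ω ∧ T₁ ω < w} : Set Ω) := by
  refine Filter.eventuallyEq_set.mpr ?_
  filter_upwards [hmono, himco] with ω hmono himco
  have := hT₁ ω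
  simp only [Set.mem_union, Set.mem_ofPred_eq]
  omega

theorem aedisjoint_setOf_eq_setOf_lt (hmono : ∀ᵐ ω ∂P, T₀ ω ≤ T₁ ω) :
    AEDisjoint P {ω | T₀ ω = w} {ω | 1 ≤ T₁ ω ∧ T₁ ω < w} := by
  refine measure_eq_zero_iff_ae_notMem.mpr ?_
  filter_upwards [hmono] with ω hmono ⟨h₀, _, h₁⟩
  exact absurd (h₀ ▸ hmono) h₁.not_ge

end events

section cmean

variable {Ω : Type*} [MeasurableSpace Ω] {P : Measure Ω} {A A' : Set Ω} {X Y : Ω → ℝ}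

theorem cmean_eq_inv_mul_setIntegral : cmean P A X = (P.real A)⁻¹ * ∫ ω in A, X ω ∂P := by
  rw [cmean, ProbabilityTheory.cond, integral_smul_measure, ENNReal.toReal_inv, smul_eq_mul,
    measureReal_def]

theorem cmean_congr_set (h : A =ᵐ[P] A') : cmean P A X = cmean P A' X := by
  rw [cmean_eq_inv_mul_setIntegral, cmean_eq_inv_mul_setIntegral, measureReal_congr h,
    setIntegral_congr_set h]

theorem cmean_congr_fun (hA : MeasurableSet A) (h : Set.EqOn X Y A) :
    cmean P A X = cmean P A Y := by
  rw [cmean_eq_inv_mul_setIntegral, cmean_eq_inv_mul_setIntegral, setIntegral_congr_fun hA h]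

variable [IsFiniteMeasure P]

theorem measureReal_mul_cmean : P.real A * cmean P A X = ∫ ω in A, X ω ∂P := by
  by_cases h : P A = 0
  · simp [Measure.restrict_eq_zero.mpr h, measureReal_def, h]
  · rw [cmean_eq_inv_mul_setIntegral, ← mul_assoc,
      mul_inv_cancel₀ ((measureReal_ne_zero_iff (measure_ne_top P A)).mpr h), one_mul]

theorem cmean_union {B C : Set Ω} (hBC : AEDisjoint P B C) (hC : MeasurableSet C)
    (hX : Integrable X P) :
    cmean P (B ∪ C) X = P.real B / (P.real B + P.real C) * cmean P B X
      + P.real C / (P.real B + P.real C) * cmean P C X := by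
  rw [cmean_eq_inv_mul_setIntegral, measureReal_union₀ hC.nullMeasurableSet hBC,
    setIntegral_union₀ hBC hC.nullMeasurableSet hX.integrableOn hX.integrableOn,
    ← measureReal_mul_cmean, ← measureReal_mul_cmean]
  ring

end cmean

namespace ProbabilityTheory

variable {Ω β γ : Type*} [MeasurableSpace Ω] [MeasurableSpace β] [MeasurableSpace γ]
  {P : Measure Ω} [IsFiniteMeasure P] {f : Ω → β} {g : Ω → γ} {s : Set β} {t : Set γ}

theorem IndepFun.cmean_indicator_preimage (hfg : IndepFun f g P) (hf : Measurable f)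
    (hg : Measurable g) (hs : MeasurableSet s) (ht : MeasurableSet t) (h0 : P (g ⁻¹' t) ≠ 0) :
    cmean P (g ⁻¹' t) ((f ⁻¹' s).indicator 1) = P.real (f ⁻¹' s) := by
  rw [cmean, integral_indicator_one (hf hs), measureReal_def, measureReal_def,
    cond_apply (hg ht), Set.inter_comm, hfg.measure_inter_preimage_eq_mul s t hs ht, mul_comm,
    mul_assoc, ENNReal.mul_inv_cancel h0 (measure_ne_top P _), mul_one]

theorem IndepFun.setIntegral_inter_preimage (hfg : IndepFun f g P) (hf : Measurable f)
    (hg : Measurable g) (hs : MeasurableSet s) (ht : MeasurableSet t) {h : β → ℝ}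
    (hh : Measurable h) (hint : Integrable (h ∘ f) P) :
    ∫ ω in f ⁻¹' s ∩ g ⁻¹' t, h (f ω) ∂P = (∫ ω in f ⁻¹' s, h (f ω) ∂P) * P.real (g ⁻¹' t) := by
  have hf_ind : s.indicator h ∘ f = (f ⁻¹' s).indicator (h ∘ f) := rfl
  have hg_ind : t.indicator (1 : γ → ℝ) ∘ g = (g ⁻¹' t).indicator 1 := by
    ext ω
    by_cases hω : g ω ∈ t <;> simp [hω]
  have hprod : (s.indicator h ∘ f) * (t.indicator (1 : γ → ℝ) ∘ g)
      = (f ⁻¹' s ∩ g ⁻¹' t).indicator (h ∘ f) := by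
    rw [hf_ind, hg_ind, Set.inter_comm, ← Set.indicator_indicator]
    ext ω
    by_cases hω : ω ∈ g ⁻¹' t <;> simp [hω]
  calc ∫ ω in f ⁻¹' s ∩ g ⁻¹' t, h (f ω) ∂P
      = ∫ ω, ((s.indicator h ∘ f) * (t.indicator (1 : γ → ℝ) ∘ g)) ω ∂P := by
        rw [hprod, integral_indicator ((hf hs).inter (hg ht))]; rfl
    _ = (∫ ω, (s.indicator h ∘ f) ω ∂P) * ∫ ω, (t.indicator (1 : γ → ℝ) ∘ g) ω ∂P :=
        (hfg.comp (hh.indicator hs) (measurable_one.indicator ht)).integral_mul_eq_mul_integral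
          (hf_ind ▸ hint.indicator (hf hs)).aestronglyMeasurable
          (hg_ind ▸ (integrable_const (1 : ℝ)).indicator (hg ht)).aestronglyMeasurable
    _ = _ := by
        rw [hf_ind, hg_ind, integral_indicator (hf hs), integral_indicator_one (hg ht)]; rfl

theorem IndepFun.cmean_inter_preimage (hfg : IndepFun f g P) (hf : Measurable f)
    (hg : Measurable g) (hs : MeasurableSet s) (ht : MeasurableSet t) {h : β → ℝ}
    (hh : Measurable h) (hint : Integrable (h ∘ f) P) (h0 : P (g ⁻¹' t) ≠ 0) :
    cmean P (f ⁻¹' s ∩ g ⁻¹' t) (h ∘ f) = cmean P (f ⁻¹' s) (h ∘ f) := by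
  have h0' : P.real (g ⁻¹' t) ≠ 0 := (measureReal_ne_zero_iff (measure_ne_top P _)).mpr h0
  rw [cmean_eq_inv_mul_setIntegral, cmean_eq_inv_mul_setIntegral, measureReal_def,
    hfg.measure_inter_preimage_eq_mul s t hs ht, ENNReal.toReal_mul, ← measureReal_def,
    ← measureReal_def, Function.comp_def, hfg.setIntegral_inter_preimage hf hg hs ht hh hint,
    mul_inv, mul_mul_mul_comm, inv_mul_cancel₀ h0', mul_one]

theorem IndepFun.cmean_eq_mixture (hfg : IndepFun f g P) (hf : Measurable f)
    (hg : Measurable g) {s₀ s₁ : Set β} {t₀ t₁ : Set γ} (hs₀ : MeasurableSet s₀)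
    (hs₁ : MeasurableSet s₁) (ht₀ : MeasurableSet t₀) (ht₁ : MeasurableSet t₁) {h : β → ℝ}
    (hh : Measurable h) (hint : Integrable (h ∘ f) P) {A : Set Ω}
    (hA : A =ᵐ[P] (f ⁻¹' s₀ ∪ f ⁻¹' s₁ : Set Ω)) (hd : AEDisjoint P (f ⁻¹' s₀) (f ⁻¹' s₁))
    (h₀ : P (f ⁻¹' s₀ ∩ g ⁻¹' t₀) ≠ 0) (h₁ : P (f ⁻¹' s₁ ∩ g ⁻¹' t₁) ≠ 0) {π : ℝ}
    (hπ : π = cmean P (g ⁻¹' t₀) ((f ⁻¹' s₀).indicator 1) /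
      (cmean P (g ⁻¹' t₀) ((f ⁻¹' s₀).indicator 1) + cmean P (g ⁻¹' t₁) ((f ⁻¹' s₁).indicator 1))) :
    cmean P A (h ∘ f) = π * cmean P (f ⁻¹' s₀ ∩ g ⁻¹' t₀) (h ∘ f)
      + (1 - π) * cmean P (f ⁻¹' s₁ ∩ g ⁻¹' t₁) (h ∘ f) := by
  have hg₀ : P (g ⁻¹' t₀) ≠ 0 := measure_mono_null Set.inter_subset_right |>.mt h₀
  have hg₁ : P (g ⁻¹' t₁) ≠ 0 := measure_mono_null Set.inter_subset_right |>.mt h₁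
  have hpos : P.real (f ⁻¹' s₀) + P.real (f ⁻¹' s₁) ≠ 0 :=
    (add_pos_of_pos_of_nonneg (ENNReal.toReal_pos (measure_mono_null Set.inter_subset_left |>.mt h₀)
      (measure_ne_top P _)) measureReal_nonneg).ne'
  rw [hπ, hfg.cmean_indicator_preimage hf hg hs₀ ht₀ hg₀,
    hfg.cmean_indicator_preimage hf hg hs₁ ht₁ hg₁,
    hfg.cmean_inter_preimage hf hg hs₀ ht₀ hh hint hg₀,
    hfg.cmean_inter_preimage hf hg hs₁ ht₁ hh hint hg₁, one_sub_div hpos, add_sub_cancel_left,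
    cmean_congr_set hA, cmean_union hd (hf hs₁) hint]

end ProbabilityTheory

theorem marginal_always_taker_covariate_means_general
    {Ω : Type*} [MeasurableSpace Ω] (P : MeasureTheory.Measure Ω) [IsProbabilityMeasure P]
    (Z : Ω → ℕ) (hZmeas : Measurable Z)
    (wbar : ℕ)
    (T : ℕ → ℕ → Ω → ℕ) (hTmeas : ∀ w z, Measurable (T w z))
    (hTrange : ∀ w ∈ Set.Icc 1 wbar, ∀ z ≤ 1, ∀ ω, T w z ω ≤ w)
    (hAbs : ∀ z ≤ 1, ∀ w, 1 ≤ w → w < wbar → ∀ ω,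
      (1 ≤ T w z ω → T (w + 1) z ω = T w z ω + 1) ∧
      (T w z ω = 0 → T (w + 1) z ω ≤ 1))
    (X : Ω → ℝ) (hXmeas : Measurable X) (hXint : MeasureTheory.Integrable X P)
    (hIndepX : ∀ w ∈ Set.Icc 1 wbar, IndepFun (fun ω => (X ω, T w 1 ω, T w 0 ω)) Z P)
    (hMono : ∀ w ∈ Set.Icc 1 wbar, ∀ᵐ ω ∂P, T w 0 ω ≤ T w 1 ω)
    (hIMCO : ∀ w ∈ Set.Icc 1 wbar, ∀ᵐ ω ∂P, T w 0 ω < T w 1 ω → T w 1 ω = w)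
    (w : ℕ) (hw2 : 2 ≤ w) (hwle : w ≤ wbar)
    (h1 : 0 < P {ω | T 1 (Z ω) ω = 1 ∧ Z ω = 0})
    (h2 : 0 < P {ω | 1 ≤ T w (Z ω) ω ∧ T w (Z ω) ω < w ∧ Z ω = 1})
    (piw : ℝ)
    (hpiw : piw =
      cmean P {ω | Z ω = 0} (fun ω => if T w (Z ω) ω = w then (1 : ℝ) else 0) /
        (cmean P {ω | Z ω = 0} (fun ω => if T w (Z ω) ω = w then (1 : ℝ) else 0)
          + cmean P {ω | Z ω = 1}
              (fun ω => if 1 ≤ T w (Z ω) ω ∧ T w (Z ω) ω < w then (1 : ℝ) else 0))) :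
    cmean P {ω | T w 1 ω = T w 0 ω ∧ 1 ≤ T w 0 ω} X =
      piw * cmean P {ω | T 1 (Z ω) ω = 1 ∧ Z ω = 0} X
        + (1 - piw) * cmean P {ω | 1 ≤ T w (Z ω) ω ∧ T w (Z ω) ω < w ∧ Z ω = 1} X := by
  have hw : w ∈ Set.Icc 1 wbar := ⟨by omega, hwle⟩
  have hE₀ : {ω | T 1 (Z ω) ω = 1 ∧ Z ω = 0} = {ω | T w 0 ω = w} ∩ Z ⁻¹' {0} := by
    rw [setOf_and_eq_inter_preimage Z (fun z ω => T 1 z ω = 1)]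
    congr with ω
    exact (eq_self_iff_eq_one_of_absorbing (fun k hk hkn => hAbs 0 zero_le_one k hk hkn ω)
      (hTrange 1 ⟨le_rfl, by omega⟩ 0 zero_le_one ω) hw.1 hwle).symm
  have hE₁ : {ω | 1 ≤ T w (Z ω) ω ∧ T w (Z ω) ω < w ∧ Z ω = 1}
      = {ω | 1 ≤ T w 1 ω ∧ T w 1 ω < w} ∩ Z ⁻¹' {1} := by
    simpa only [and_assoc] using
      setOf_and_eq_inter_preimage Z (fun z ω => 1 ≤ T w z ω ∧ T w z ω < w) 1
  have hπ₀ : cmean P {ω | Z ω = 0} (fun ω => if T w (Z ω) ω = w then (1 : ℝ) else 0)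
      = cmean P (Z ⁻¹' {0}) ({ω | T w 0 ω = w}.indicator 1) :=
    cmean_congr_fun (hZmeas (measurableSet_singleton 0)) fun ω (hz : Z ω = 0) => by
      simp [Set.indicator_apply, hz]
  have hπ₁ : cmean P {ω | Z ω = 1}
      (fun ω => if 1 ≤ T w (Z ω) ω ∧ T w (Z ω) ω < w then (1 : ℝ) else 0)
      = cmean P (Z ⁻¹' {1}) ({ω | 1 ≤ T w 1 ω ∧ T w 1 ω < w}.indicator 1) :=
    cmean_congr_fun (hZmeas (measurableSet_singleton 1)) fun ω (hz : Z ω = 1) => by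
      simp [Set.indicator_apply, hz]
  rw [hE₀] at h1 ⊢
  rw [hE₁] at h2 ⊢
  rw [hπ₀, hπ₁] at hpiw
  -- `X` is `Prod.fst ∘ (X, T w 1, T w 0)`, and both events are preimages under that triple.
  exact (hIndepX w hw).cmean_eq_mixture (s₀ := {p | p.2.2 = w})
    (s₁ := {p | 1 ≤ p.2.1 ∧ p.2.1 < w}) (hXmeas.prodMk ((hTmeas w 1).prodMk (hTmeas w 0))) hZmeas
    (measurable_snd.snd (measurableSet_singleton w)) (measurable_snd.fst measurableSet_Ico)
    (measurableSet_singleton 0) (measurableSet_singleton 1) measurable_fst hXint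
    (setOf_eq_and_one_le_ae_eq_union hw.1 (hTrange w hw 1 le_rfl) (hMono w hw) (hIMCO w hw))
    (aedisjoint_setOf_eq_setOf_lt (hMono w hw)) h1.ne' h2.ne' hpiw

theorem marginal_always_taker_covariate_means
    {Ω : Type*} [MeasurableSpace Ω] (P : MeasureTheory.Measure Ω) [IsProbabilityMeasure P]
    (Z : Ω → ℕ) (hZmeas : Measurable Z) (hZbin : ∀ ω, Z ω ≤ 1)
    (hZpos : 0 < P {ω | Z ω = 1}) (hZlt : P {ω | Z ω = 1} < 1)
    (wbar : ℕ) (hwbar : 1 ≤ wbar)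
    (T : ℕ → ℕ → Ω → ℕ) (hTmeas : ∀ w z, Measurable (T w z))
    (hTrange : ∀ w ∈ Set.Icc 1 wbar, ∀ z ≤ 1, ∀ ω, T w z ω ≤ w)
    (hAbs : ∀ z ≤ 1, ∀ w, 1 ≤ w → w < wbar → ∀ ω,
      (1 ≤ T w z ω → T (w + 1) z ω = T w z ω + 1) ∧
      (T w z ω = 0 → T (w + 1) z ω ≤ 1))
    (X : Ω → ℝ) (hXmeas : Measurable X) (hXint : MeasureTheory.Integrable X P)
    (hIndepX : ∀ w ∈ Set.Icc 1 wbar, IndepFun (fun ω => (X ω, T w 1 ω, T w 0 ω)) Z P)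
    (hMono : ∀ w ∈ Set.Icc 1 wbar, ∀ᵐ ω ∂P, T w 0 ω ≤ T w 1 ω)
    (hIMCO : ∀ w ∈ Set.Icc 1 wbar, ∀ᵐ ω ∂P, T w 0 ω < T w 1 ω → T w 1 ω = w)
    (w : ℕ) (hw2 : 2 ≤ w) (hwle : w ≤ wbar)
    (h1 : 0 < P {ω | T 1 (Z ω) ω = 1 ∧ Z ω = 0})
    (h2 : 0 < P {ω | 1 ≤ T w (Z ω) ω ∧ T w (Z ω) ω < w ∧ Z ω = 1})
    (h3 : 0 < P {ω | T w 1 ω = T w 0 ω ∧ 1 ≤ T w 0 ω})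
    (piw : ℝ)
    (hpiw : piw =
      cmean P {ω | Z ω = 0} (fun ω => if T w (Z ω) ω = w then (1 : ℝ) else 0) /
        (cmean P {ω | Z ω = 0} (fun ω => if T w (Z ω) ω = w then (1 : ℝ) else 0)
          + cmean P {ω | Z ω = 1}
              (fun ω => if 1 ≤ T w (Z ω) ω ∧ T w (Z ω) ω < w then (1 : ℝ) else 0))) :
    cmean P {ω | T w 1 ω = T w 0 ω ∧ 1 ≤ T w 0 ω} X =
      piw * cmean P {ω | T 1 (Z ω) ω = 1 ∧ Z ω = 0} X
        + (1 - piw) * cmean P {ω | 1 ≤ T w (Z ω) ω ∧ T w (Z ω) ω < w ∧ Z ω = 1} X :=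
  marginal_always_taker_covariate_means_general P Z hZmeas wbar T hTmeas hTrange hAbs X hXmeas hXint
    hIndepX hMono hIMCO w hw2 hwle h1 h2 piw hpiw
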